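/- For all integers m' ≥ 1, m ≥ 1 and every real T > 1, the set of extreme points of the polytope P(m',m,T) = {(d',d) ∈ ℝ^{m'} × ℝ^{m} : d'_j ≥ 0 for all j, d_i ≥ 0 for all i, Σ_{i=1}^{m} d_i ≤ 1 − 1/T, Σ_{j=1}^{m'} d'_j + Σ_{i=1}^{m} d_i ≤ 1} is exactly the set S(m',m,T) = {0} ∪ {e'_j : j = 1,…,m'} ∪ {(1 − 1/T)·e_i : i = 1,…,m} ∪ {(1/T)·e'_j + (1 − 1/T)·e_i : j = 1,…,m', i = 1,…,m}, and this set has exactly (m'+1)(m+1) elements. -/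

import Mathlib

/-!
An extreme point `p` admits no nonzero direction `v` with `p ± ε v` in the polytope for small
`ε`, and since the constraints are linear such a direction exists as soon as `v` only moves
positive coordinates and leaves every slack sum constraint free. Shifting mass between two
positive coordinates shows that `p` has at most one positive static and one positive dynamic
coordinate; moving a single positive coordinate, or trading a static against a dynamic one,
shows which sum constraints must then be tight, and this pins `p` to one of the vertices.
Conversely each vertex is the unique maximiser of a linear functional:
`-∑ d' - ∑ d`, `d'_j`, `d_i - ∑ d'` and `d'_j + 2 d_i ≤ (∑ d' + ∑ d) + ∑ d ≤ 1 + a`.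
The vertices are indexed injectively by `Option (Fin m') × Option (Fin m)`.
-/

open Filter Topology Finset

theorem eventually_le_add_mul {a b c : ℝ} (hba : b ≤ a) (h : b < a ∨ c = 0) :
    ∀ᶠ ε in 𝓝 (0 : ℝ), b ≤ a + ε * c := by
  rcases h with h | rfl
  · have hlim : Tendsto (fun ε : ℝ => a + ε * c) (𝓝 0) (𝓝 a) :=
      (continuous_const.add (continuous_id.mul continuous_const)).tendsto' 0 a (by simp)
    exact (hlim.eventually_const_lt h).mono fun _ => le_of_lt
  · simpa using hba

theorem eq_zero_of_eventually_add_smul_mem {E : Type*} [AddCommGroup E] [Module ℝ E]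
    {A : Set E} {p v : E} (hp : p ∈ A.extremePoints ℝ)
    (hv : ∀ᶠ ε in 𝓝 (0 : ℝ), p + ε • v ∈ A) : v = 0 := by
  have hneg : ∀ᶠ ε in 𝓝 (0 : ℝ), p + (-ε) • v ∈ A :=
    (by simpa using continuous_neg.tendsto (0 : ℝ) :
      Tendsto (fun ε : ℝ => -ε) (𝓝 0) (𝓝 0)).eventually hv
  obtain ⟨ε, ⟨hε₁, hε₂⟩, hε⟩ := (((hv.and hneg).filter_mono nhdsWithin_le_nhds).and
    (self_mem_nhdsWithin : {ε : ℝ | ε ≠ 0} ∈ 𝓝[≠] 0)).exists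
  have hmid : p ∈ openSegment ℝ (p + ε • v) (p + (-ε) • v) :=
    ⟨1 / 2, 1 / 2, by norm_num, by norm_num, by norm_num, by module⟩
  have hfix : p + ε • v = p := hp.2 hε₁ hε₂ hmid
  exact (smul_eq_zero.1 (add_eq_left.1 hfix)).resolve_left hε

theorem mem_extremePoints_of_unique_maximizer {E : Type*} [NormedAddCommGroup E]
    [NormedSpace ℝ E] [FiniteDimensional ℝ E] {A : Set E} {x : E} (f : E →ₗ[ℝ] ℝ)
    (hx : x ∈ A) (hle : ∀ y ∈ A, f y ≤ f x) (heq : ∀ y ∈ A, f x ≤ f y → y = x) :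
    x ∈ A.extremePoints ℝ :=
  exposedPoints_subset_extremePoints
    ⟨hx, LinearMap.toContinuousLinearMap f, fun y hy => ⟨hle y hy, heq y hy⟩⟩

theorem smul_single_one {κ R : Type*} [DecidableEq κ] [Semiring R] (c : R) (i : κ) :
    c • (Pi.single i 1 : κ → R) = Pi.single i c := by
  rw [← Pi.single_smul', smul_eq_mul, mul_one]

theorem single_apply_nonneg {κ : Type*} [DecidableEq κ] {c : ℝ} (hc : 0 ≤ c) (j l : κ) :
    0 ≤ (Pi.single j c : κ → ℝ) l :=
  (Pi.single_nonneg (α := fun _ => ℝ)).2 hc l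

theorem eq_single_of_sum_le {κ : Type*} [Fintype κ] [DecidableEq κ] {g : κ → ℝ}
    (hg : ∀ k, 0 ≤ g k) {j : κ} (h : ∑ k, g k ≤ g j) : g = Pi.single j (g j) := by
  funext k
  rcases eq_or_ne k j with rfl | hk
  · simp
  · have hpair := sum_le_sum_of_subset_of_nonneg (subset_univ {k, j}) fun i _ _ => hg i
    rw [sum_pair hk] at hpair
    rw [Pi.single_eq_of_ne hk]
    linarith [hg k]

theorem eq_zero_or_exists_eq_single {κ : Type*} [DecidableEq κ] {g : κ → ℝ}
    (hg : ∀ k, 0 ≤ g k) (h : {k | 0 < g k}.Subsingleton) :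
    g = 0 ∨ ∃ j x, 0 < x ∧ g = Pi.single j x := by
  by_cases hpos : ∃ j, 0 < g j
  · obtain ⟨j, hj⟩ := hpos
    refine .inr ⟨j, g j, hj, funext fun k => ?_⟩
    rcases eq_or_ne k j with rfl | hk
    · simp
    · rw [Pi.single_eq_of_ne hk]
      exact le_antisymm (not_lt.1 fun hk' => hk (h hk' hj)) (hg k)
  · simp only [not_exists, not_lt] at hpos
    exact .inl (funext fun k => le_antisymm (hpos k) (hg k))

/-- The polytope `P(m', m, T)` with the non-coherent bound `1 - 1/T` replaced by `a`. -/
def dofRegion (ι' ι : Type*) [Fintype ι'] [Fintype ι] (a : ℝ) : Set ((ι' → ℝ) × (ι → ℝ)) :=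
  {p | (∀ j, 0 ≤ p.1 j) ∧ (∀ i, 0 ≤ p.2 i) ∧ (∑ i, p.2 i ≤ a) ∧
    ((∑ j, p.1 j) + (∑ i, p.2 i) ≤ 1)}

def dofVertices (ι' ι : Type*) [DecidableEq ι'] [DecidableEq ι] (a : ℝ) :
    Set ((ι' → ℝ) × (ι → ℝ)) :=
  {(0, 0)} ∪ (⋃ j, {(Pi.single j 1, 0)}) ∪ (⋃ i, {(0, a • Pi.single i 1)}) ∪
    ⋃ j, ⋃ i, {((1 - a) • Pi.single j 1, a • Pi.single i 1)}

section Region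

variable {ι' ι : Type*} [Fintype ι'] [Fintype ι] {a : ℝ}

section Perturbation

variable {p v : (ι' → ℝ) × (ι → ℝ)}

theorem eventually_add_smul_mem_dofRegion (hp : p ∈ dofRegion ι' ι a)
    (h₁ : v.1.support ⊆ {j | 0 < p.1 j}) (h₂ : v.2.support ⊆ {i | 0 < p.2 i})
    (h₃ : ∑ i, v.2 i ≠ 0 → ∑ i, p.2 i < a)
    (h₄ : ∑ j, v.1 j + ∑ i, v.2 i ≠ 0 → ∑ j, p.1 j + ∑ i, p.2 i < 1) :
    ∀ᶠ ε in 𝓝 (0 : ℝ), p + ε • v ∈ dofRegion ι' ι a := by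
  obtain ⟨hp₁, hp₂, hp₃, hp₄⟩ := hp
  simp only [dofRegion, Set.mem_ofPred_eq, Prod.fst_add, Prod.snd_add, Prod.smul_fst,
    Prod.smul_snd, Pi.add_apply, Pi.smul_apply, smul_eq_mul, sum_add_distrib, ← mul_sum]
  refine (eventually_all.2 fun j => ?_).and
    ((eventually_all.2 fun i => ?_).and (Eventually.and ?_ ?_))
  · exact eventually_le_add_mul (hp₁ j) (or_iff_not_imp_right.2 fun hj => h₁ hj)
  · exact eventually_le_add_mul (hp₂ i) (or_iff_not_imp_right.2 fun hi => h₂ hi)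
  · refine (eventually_le_add_mul (sub_nonneg.2 hp₃) (c := -∑ i, v.2 i)
      (or_iff_not_imp_right.2 fun h => sub_pos.2 (h₃ (neg_ne_zero.1 h)))).mono fun ε hε => ?_
    linarith
  · refine (eventually_le_add_mul (sub_nonneg.2 hp₄) (c := -(∑ j, v.1 j + ∑ i, v.2 i))
      (or_iff_not_imp_right.2 fun h => sub_pos.2 (h₄ (neg_ne_zero.1 h)))).mono fun ε hε => ?_
    linarith

theorem eq_zero_of_mem_extremePoints_dofRegion (hp : p ∈ (dofRegion ι' ι a).extremePoints ℝ)
    (h₁ : v.1.support ⊆ {j | 0 < p.1 j}) (h₂ : v.2.support ⊆ {i | 0 < p.2 i})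
    (h₃ : ∑ i, v.2 i ≠ 0 → ∑ i, p.2 i < a)
    (h₄ : ∑ j, v.1 j + ∑ i, v.2 i ≠ 0 → ∑ j, p.1 j + ∑ i, p.2 i < 1) : v = 0 :=
  eq_zero_of_eventually_add_smul_mem hp (eventually_add_smul_mem_dofRegion hp.1 h₁ h₂ h₃ h₄)

theorem subsingleton_pos_fst_of_mem_extremePoints [DecidableEq ι']
    (hp : p ∈ (dofRegion ι' ι a).extremePoints ℝ) : {j | 0 < p.1 j}.Subsingleton := by
  intro j hj k hk
  by_contra hjk
  have hv := eq_zero_of_mem_extremePoints_dofRegion hp (v := (Pi.single j 1 - Pi.single k 1, 0))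
    ((Function.support_sub _ _).trans (Set.union_subset
      (Pi.support_single_subset.trans (Set.singleton_subset_iff.2 hj))
      (Pi.support_single_subset.trans (Set.singleton_subset_iff.2 hk))))
    (by simp) (by simp) (by simp)
  simpa [Pi.single_eq_of_ne hjk] using congr_fun (congrArg Prod.fst hv) j

theorem subsingleton_pos_snd_of_mem_extremePoints [DecidableEq ι]
    (hp : p ∈ (dofRegion ι' ι a).extremePoints ℝ) : {i | 0 < p.2 i}.Subsingleton := by
  intro i hi k hk
  by_contra hik
  have hv := eq_zero_of_mem_extremePoints_dofRegion hp (v := (0, Pi.single i 1 - Pi.single k 1))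
    (by simp) ((Function.support_sub _ _).trans (Set.union_subset
      (Pi.support_single_subset.trans (Set.singleton_subset_iff.2 hi))
      (Pi.support_single_subset.trans (Set.singleton_subset_iff.2 hk))))
    (by simp) (by simp)
  simpa [Pi.single_eq_of_ne hik] using congr_fun (congrArg Prod.snd hv) i

theorem sum_add_sum_eq_one_of_mem_extremePoints [DecidableEq ι']
    (hp : p ∈ (dofRegion ι' ι a).extremePoints ℝ) {j : ι'} (hj : 0 < p.1 j) :
    ∑ j, p.1 j + ∑ i, p.2 i = 1 := by
  by_contra hne
  have hv := eq_zero_of_mem_extremePoints_dofRegion hp (v := (Pi.single j 1, 0))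
    (Pi.support_single_subset.trans (Set.singleton_subset_iff.2 hj)) (by simp) (by simp)
    fun _ => lt_of_le_of_ne hp.1.2.2.2 hne
  simpa using congr_fun (congrArg Prod.fst hv) j

theorem sum_snd_eq_or_sum_add_sum_eq_one_of_mem_extremePoints [DecidableEq ι]
    (hp : p ∈ (dofRegion ι' ι a).extremePoints ℝ) {i : ι} (hi : 0 < p.2 i) :
    ∑ i, p.2 i = a ∨ ∑ j, p.1 j + ∑ i, p.2 i = 1 := by
  by_contra! hne
  have hv := eq_zero_of_mem_extremePoints_dofRegion hp (v := (0, Pi.single i 1))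
    (by simp) (Pi.support_single_subset.trans (Set.singleton_subset_iff.2 hi))
    (fun _ => lt_of_le_of_ne hp.1.2.2.1 hne.1) fun _ => lt_of_le_of_ne hp.1.2.2.2 hne.2
  simpa using congr_fun (congrArg Prod.snd hv) i

theorem sum_snd_eq_of_mem_extremePoints [DecidableEq ι'] [DecidableEq ι]
    (hp : p ∈ (dofRegion ι' ι a).extremePoints ℝ) {j : ι'} {i : ι} (hj : 0 < p.1 j)
    (hi : 0 < p.2 i) : ∑ i, p.2 i = a := by
  by_contra hne
  have hv := eq_zero_of_mem_extremePoints_dofRegion hp (v := (Pi.single j 1, -Pi.single i 1))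
    (Pi.support_single_subset.trans (Set.singleton_subset_iff.2 hj))
    ((Function.support_neg _).trans_subset
      (Pi.support_single_subset.trans (Set.singleton_subset_iff.2 hi)))
    (fun _ => lt_of_le_of_ne hp.1.2.2.1 hne) (by simp)
  simpa using congr_fun (congrArg Prod.fst hv) j

end Perturbation

theorem extremePoints_dofRegion_subset [DecidableEq ι'] [DecidableEq ι] (ha : a < 1) :
    (dofRegion ι' ι a).extremePoints ℝ ⊆ dofVertices ι' ι a := by
  rintro ⟨x, y⟩ hp
  obtain ⟨hx, hy, hsy, -⟩ := hp.1
  obtain rfl | ⟨j, s, hs, rfl⟩ := eq_zero_or_exists_eq_single hx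
    (subsingleton_pos_fst_of_mem_extremePoints hp) <;>
  obtain rfl | ⟨i, t, ht, rfl⟩ := eq_zero_or_exists_eq_single hy
    (subsingleton_pos_snd_of_mem_extremePoints hp)
  · simp [dofVertices]
  · have h := sum_snd_eq_or_sum_add_sum_eq_one_of_mem_extremePoints hp (i := i) (by simpa)
    simp only [Fintype.sum_pi_single', Pi.zero_apply, sum_const_zero, zero_add] at h hsy
    obtain rfl : t = a := h.resolve_right fun h => by linarith
    exact .inl (.inr (Set.mem_iUnion.2 ⟨i, by simp [smul_single_one]⟩))
  · have h := sum_add_sum_eq_one_of_mem_extremePoints hp (j := j) (by simpa)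
    simp only [Fintype.sum_pi_single', Pi.zero_apply, sum_const_zero, add_zero] at h
    exact .inl (.inl (.inr (Set.mem_iUnion.2 ⟨j, by simp [h]⟩)))
  · have h₁ := sum_add_sum_eq_one_of_mem_extremePoints hp (j := j) (by simpa)
    have h₂ := sum_snd_eq_of_mem_extremePoints hp (j := j) (i := i) (by simpa) (by simpa)
    simp only [Fintype.sum_pi_single'] at h₁ h₂
    obtain rfl : s = 1 - a := by linarith
    exact .inr (Set.mem_iUnion₂.2 ⟨j, i, by simp [smul_single_one, h₂]⟩)

theorem zero_mem_extremePoints_dofRegion (ha : 0 ≤ a) :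
    ((0, 0) : (ι' → ℝ) × (ι → ℝ)) ∈ (dofRegion ι' ι a).extremePoints ℝ := by
  refine mem_extremePoints_of_unique_maximizer
    ((dotProductBilin ℝ ℝ (-1)).coprod (dotProductBilin ℝ ℝ (-1)))
    ⟨fun _ => le_rfl, fun _ => le_rfl, by simpa, by simp⟩ (fun y ⟨hy₁, hy₂, _, _⟩ => ?_)
    fun y ⟨hy₁, hy₂, _, _⟩ h => ?_ <;>
  simp only [LinearMap.coprod_apply, dotProductBilin_apply_apply, neg_dotProduct,
    one_dotProduct, dotProduct_zero, add_zero] at *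
  all_goals
    have hs₁ := sum_nonneg fun j (_ : j ∈ univ) => hy₁ j
    have hs₂ := sum_nonneg fun i (_ : i ∈ univ) => hy₂ i
  · linarith
  · exact Prod.ext ((Fintype.sum_eq_zero_iff_of_nonneg hy₁).1 (by linarith))
      ((Fintype.sum_eq_zero_iff_of_nonneg hy₂).1 (by linarith))

theorem single_zero_mem_extremePoints_dofRegion [DecidableEq ι'] (ha : 0 ≤ a) (j : ι') :
    ((Pi.single j 1, 0) : (ι' → ℝ) × (ι → ℝ)) ∈ (dofRegion ι' ι a).extremePoints ℝ := by
  refine mem_extremePoints_of_unique_maximizer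
    ((dotProductBilin ℝ ℝ (Pi.single j 1)).coprod 0)
    ⟨single_apply_nonneg zero_le_one j, fun _ => le_rfl, by simpa, by simp⟩
    (fun y ⟨hy₁, hy₂, _, hy₄⟩ => ?_) fun y ⟨hy₁, hy₂, _, hy₄⟩ h => ?_ <;>
  simp only [LinearMap.coprod_apply, dotProductBilin_apply_apply, single_dotProduct,
    LinearMap.zero_apply, add_zero, one_mul, Pi.single_eq_same] at *
  all_goals
    have hj := single_le_sum (fun l _ => hy₁ l) (mem_univ j)
    have hs₂ := sum_nonneg fun i (_ : i ∈ univ) => hy₂ i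
  · linarith
  · have h₁ := eq_single_of_sum_le hy₁ (j := j) (by linarith)
    rw [show y.1 j = 1 by linarith] at h₁
    exact Prod.ext h₁ ((Fintype.sum_eq_zero_iff_of_nonneg hy₂).1 (by linarith))

theorem zero_single_mem_extremePoints_dofRegion [DecidableEq ι] (ha₀ : 0 ≤ a) (ha₁ : a ≤ 1)
    (i : ι) :
    ((0, a • Pi.single i 1) : (ι' → ℝ) × (ι → ℝ)) ∈ (dofRegion ι' ι a).extremePoints ℝ := by
  rw [smul_single_one]
  refine mem_extremePoints_of_unique_maximizer
    ((dotProductBilin ℝ ℝ (-1)).coprod (dotProductBilin ℝ ℝ (Pi.single i 1)))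
    ⟨fun _ => le_rfl, single_apply_nonneg ha₀ i, by simp, by simpa⟩
    (fun y ⟨hy₁, hy₂, hy₃, _⟩ => ?_) fun y ⟨hy₁, hy₂, hy₃, _⟩ h => ?_ <;>
  simp only [LinearMap.coprod_apply, dotProductBilin_apply_apply, single_dotProduct,
    neg_dotProduct, one_dotProduct, dotProduct_zero, zero_add, one_mul,
    Pi.single_eq_same] at *
  all_goals
    have hi := single_le_sum (fun l _ => hy₂ l) (mem_univ i)
    have hs₁ := sum_nonneg fun j (_ : j ∈ univ) => hy₁ j
  · linarith
  · have h₂ := eq_single_of_sum_le hy₂ (j := i) (by linarith)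
    rw [show y.2 i = a by linarith] at h₂
    exact Prod.ext ((Fintype.sum_eq_zero_iff_of_nonneg hy₁).1 (by linarith)) h₂

theorem single_single_mem_extremePoints_dofRegion [DecidableEq ι'] [DecidableEq ι]
    (ha₀ : 0 ≤ a) (ha₁ : a ≤ 1) (j : ι') (i : ι) :
    (((1 - a) • Pi.single j 1, a • Pi.single i 1) : (ι' → ℝ) × (ι → ℝ)) ∈
      (dofRegion ι' ι a).extremePoints ℝ := by
  rw [smul_single_one, smul_single_one]
  refine mem_extremePoints_of_unique_maximizer
    ((dotProductBilin ℝ ℝ (Pi.single j 1)).coprod (dotProductBilin ℝ ℝ (Pi.single i 2)))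
    ⟨single_apply_nonneg (sub_nonneg.2 ha₁) j, single_apply_nonneg ha₀ i, by simp, by simp⟩
    (fun y ⟨hy₁, hy₂, hy₃, hy₄⟩ => ?_) fun y ⟨hy₁, hy₂, hy₃, hy₄⟩ h => ?_ <;>
  simp only [LinearMap.coprod_apply, dotProductBilin_apply_apply, single_dotProduct,
    one_mul, Pi.single_eq_same] at *
  all_goals
    have hj := single_le_sum (fun l _ => hy₁ l) (mem_univ j)
    have hi := single_le_sum (fun l _ => hy₂ l) (mem_univ i)
  · linarith
  · have h₁ := eq_single_of_sum_le hy₁ (j := j) (by linarith)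
    have h₂ := eq_single_of_sum_le hy₂ (j := i) (by linarith)
    rw [show y.1 j = 1 - a by linarith] at h₁
    rw [show y.2 i = a by linarith] at h₂
    exact Prod.ext h₁ h₂

theorem dofVertices_subset_extremePoints [DecidableEq ι'] [DecidableEq ι] (ha₀ : 0 ≤ a)
    (ha₁ : a ≤ 1) : dofVertices ι' ι a ⊆ (dofRegion ι' ι a).extremePoints ℝ := by
  simp only [dofVertices, Set.union_subset_iff, Set.iUnion_subset_iff,
    Set.singleton_subset_iff]
  exact ⟨⟨⟨zero_mem_extremePoints_dofRegion ha₀, single_zero_mem_extremePoints_dofRegion ha₀⟩,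
    zero_single_mem_extremePoints_dofRegion ha₀ ha₁⟩,
    single_single_mem_extremePoints_dofRegion ha₀ ha₁⟩

theorem extremePoints_dofRegion [DecidableEq ι'] [DecidableEq ι] (ha₀ : 0 ≤ a) (ha₁ : a < 1) :
    (dofRegion ι' ι a).extremePoints ℝ = dofVertices ι' ι a :=
  (extremePoints_dofRegion_subset ha₁).antisymm (dofVertices_subset_extremePoints ha₀ ha₁.le)

end Region

section Counting

def optionSingle {κ : Type*} [DecidableEq κ] (c : ℝ) (o : Option κ) : κ → ℝ :=
  o.elim 0 fun k => Pi.single k c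

theorem optionSingle_injective {κ : Type*} [DecidableEq κ] {c : ℝ} (hc : c ≠ 0) :
    Function.Injective (optionSingle (κ := κ) c) := by
  rintro (_ | k) (_ | l) h <;> simp [optionSingle] at h ⊢
  · exact hc (by simpa using (congr_fun h l).symm)
  · exact hc h
  · by_contra hkl
    exact hc (by simpa [Pi.single_eq_of_ne hkl] using congr_fun h k)

variable {ι' ι : Type*} [DecidableEq ι'] [DecidableEq ι]

def dofVertex (a : ℝ) (v : Option ι' × Option ι) : (ι' → ℝ) × (ι → ℝ) :=
  (optionSingle (v.2.elim 1 fun _ => 1 - a) v.1, optionSingle a v.2)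

theorem dofVertex_injective {a : ℝ} (ha₀ : a ≠ 0) (ha₁ : a ≠ 1) :
    Function.Injective (dofVertex (ι' := ι') (ι := ι) a) := by
  rintro ⟨oj, oi⟩ ⟨oj', oi'⟩ h
  obtain rfl : oi = oi' := optionSingle_injective ha₀ (congrArg Prod.snd h)
  have hc : oi.elim 1 (fun _ => 1 - a) ≠ 0 := by
    cases oi
    · exact one_ne_zero
    · exact sub_ne_zero.2 (Ne.symm ha₁)
  exact Prod.ext (optionSingle_injective hc (congrArg Prod.fst h)) rfl

theorem range_dofVertex (a : ℝ) :
    Set.range (dofVertex (ι' := ι') (ι := ι) a) = dofVertices ι' ι a := by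
  ext p
  simp only [dofVertices, Set.mem_union, Set.mem_iUnion, Set.mem_singleton_iff, Set.mem_range]
  constructor
  · rintro ⟨⟨_ | j, _ | i⟩, rfl⟩
    exacts [.inl (.inl (.inl rfl)),
      .inl (.inr ⟨i, by simp [dofVertex, optionSingle, smul_single_one]⟩),
      .inl (.inl (.inr ⟨j, rfl⟩)),
      .inr ⟨j, i, by simp [dofVertex, optionSingle, smul_single_one]⟩]
  · rintro (((rfl | ⟨j, rfl⟩) | ⟨i, rfl⟩) | ⟨j, i, rfl⟩)
    exacts [⟨(none, none), rfl⟩, ⟨(some j, none), rfl⟩,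
      ⟨(none, some i), by simp [dofVertex, optionSingle, smul_single_one]⟩,
      ⟨(some j, some i), by simp [dofVertex, optionSingle, smul_single_one]⟩]

theorem ncard_dofVertices [Fintype ι'] [Fintype ι] {a : ℝ} (ha₀ : a ≠ 0) (ha₁ : a ≠ 1) :
    (dofVertices ι' ι a).ncard = (Fintype.card ι' + 1) * (Fintype.card ι + 1) := by
  rw [← range_dofVertex, Set.ncard_range_of_injective (dofVertex_injective ha₀ ha₁)]
  simp

end Counting

theorem dof_region_extremePoints_general (m' m : ℕ)
    (T : ℝ) (hT : 1 < T) :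
    Set.extremePoints ℝ
      {p : (Fin m' → ℝ) × (Fin m → ℝ) |
        (∀ j, 0 ≤ p.1 j) ∧ (∀ i, 0 ≤ p.2 i) ∧ (∑ i, p.2 i ≤ 1 - 1/T) ∧
        ((∑ j, p.1 j) + (∑ i, p.2 i) ≤ 1)} =
      (({((0 : Fin m' → ℝ), (0 : Fin m → ℝ))} ∪
        (⋃ j : Fin m', {((Pi.single j 1 : Fin m' → ℝ), (0 : Fin m → ℝ))}) ∪
        (⋃ i : Fin m, {((0 : Fin m' → ℝ), (1 - 1/T) • (Pi.single i 1 : Fin m → ℝ))}) ∪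
        (⋃ j : Fin m', ⋃ i : Fin m,
          {((1/T) • (Pi.single j 1 : Fin m' → ℝ),
            (1 - 1/T) • (Pi.single i 1 : Fin m → ℝ))})) :
        Set ((Fin m' → ℝ) × (Fin m → ℝ)))
    ∧
    (({((0 : Fin m' → ℝ), (0 : Fin m → ℝ))} ∪
        (⋃ j : Fin m', {((Pi.single j 1 : Fin m' → ℝ), (0 : Fin m → ℝ))}) ∪
        (⋃ i : Fin m, {((0 : Fin m' → ℝ), (1 - 1/T) • (Pi.single i 1 : Fin m → ℝ))}) ∪
        (⋃ j : Fin m', ⋃ i : Fin m,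
          {((1/T) • (Pi.single j 1 : Fin m' → ℝ),
            (1 - 1/T) • (Pi.single i 1 : Fin m → ℝ))})) :
        Set ((Fin m' → ℝ) × (Fin m → ℝ))).ncard = (m' + 1) * (m + 1) := by
  have ha₀ : 0 < 1 - 1 / T := by rw [sub_pos, div_lt_one (by linarith)]; exact hT
  have ha₁ : 1 - 1 / T < 1 := sub_lt_self 1 (by positivity)
  have hext := extremePoints_dofRegion (ι' := Fin m') (ι := Fin m) ha₀.le ha₁
  have hcard := ncard_dofVertices (ι' := Fin m') (ι := Fin m) ha₀.ne' ha₁.ne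
  simp only [dofVertices, sub_sub_cancel, Fintype.card_fin] at hext hcard
  exact ⟨hext, hcard⟩

/-- The extreme points of the no-CSIT achievable degrees-of-freedom polytope
are exactly the origin, the static unit vectors, the scaled dynamic unit vectors, and the
product-superposition points, and there are exactly `(m'+1) * (m+1)` of them. -/
theorem dof_region_extremePoints (m' m : ℕ) (hm' : 1 ≤ m') (hm : 1 ≤ m)
    (T : ℝ) (hT : 1 < T) :
    Set.extremePoints ℝ
      {p : (Fin m' → ℝ) × (Fin m → ℝ) |
        (∀ j, 0 ≤ p.1 j) ∧ (∀ i, 0 ≤ p.2 i) ∧ (∑ i, p.2 i ≤ 1 - 1/T) ∧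
        ((∑ j, p.1 j) + (∑ i, p.2 i) ≤ 1)} =
      (({((0 : Fin m' → ℝ), (0 : Fin m → ℝ))} ∪
        (⋃ j : Fin m', {((Pi.single j 1 : Fin m' → ℝ), (0 : Fin m → ℝ))}) ∪
        (⋃ i : Fin m, {((0 : Fin m' → ℝ), (1 - 1/T) • (Pi.single i 1 : Fin m → ℝ))}) ∪
        (⋃ j : Fin m', ⋃ i : Fin m,
          {((1/T) • (Pi.single j 1 : Fin m' → ℝ),
            (1 - 1/T) • (Pi.single i 1 : Fin m → ℝ))})) :
        Set ((Fin m' → ℝ) × (Fin m → ℝ)))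
    ∧
    (({((0 : Fin m' → ℝ), (0 : Fin m → ℝ))} ∪
        (⋃ j : Fin m', {((Pi.single j 1 : Fin m' → ℝ), (0 : Fin m → ℝ))}) ∪
        (⋃ i : Fin m, {((0 : Fin m' → ℝ), (1 - 1/T) • (Pi.single i 1 : Fin m → ℝ))}) ∪
        (⋃ j : Fin m', ⋃ i : Fin m,
          {((1/T) • (Pi.single j 1 : Fin m' → ℝ),
            (1 - 1/T) • (Pi.single i 1 : Fin m → ℝ))})) :
        Set ((Fin m' → ℝ) × (Fin m → ℝ))).ncard = (m' + 1) * (m + 1) :=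
  dof_region_extremePoints_general m' m T hT
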